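/- arXiv:2405.11248 — 5 statements merged into one kernel-verified Lean document; each statement's English description precedes it below -/
import Mathlib

section
/- Sign symmetry of generalized extremiles: if the loss function ℓ is sign symmetric, i.e. ℓ(−x, c) = ℓ(x, −c) for all x, c ∈ ℝ, and the cdf F_X of X is continuous, then e(X; D, ℓ) = −e(−X; D̃, ℓ) and e(X; D̃, ℓ) = −e(−X; D, ℓ), where D̃(t) = 1 − D(1−t) is the dual distribution function. -/
open MeasureTheory Set

private lemma minOn_neg {f g : ℝ → ℝ} (hfg : ∀ x, g x = f (-x)) (c : ℝ) :
    IsMinOn f Set.univ c ↔ IsMinOn g Set.univ (-c) := by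
  constructor
  · intro h x _
    simp only [hfg, neg_neg]
    exact h (mem_univ (-x))
  · intro h x _
    have h1 := h (mem_univ (-x))
    simpa [hfg, neg_neg] using h1

private lemma no_atoms (μ : Measure ℝ) [IsProbabilityMeasure μ]
    {F : ℝ → ℝ} (hF : ∀ x, F x = (μ (Iic x)).toReal) (hFc : Continuous F) (y : ℝ) :
    μ {y} = 0 := by
  have hIio : μ (Iio y) = μ (Iic y) := by
    have hmono : Monotone (fun n : ℕ => Iic (y - 1 / (n + 1))) := by
      intro m n hmn
      apply Iic_subset_Iic.2
      have : (1 : ℝ) / (n + 1) ≤ 1 / (m + 1) := by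
        apply one_div_le_one_div_of_le <;> [positivity; exact_mod_cast by omega]
      linarith
    have hun : (⋃ n : ℕ, Iic (y - 1 / (n + 1))) = Iio y := by
      ext x
      simp only [mem_iUnion, mem_Iic, mem_Iio]
      constructor
      · rintro ⟨n, hn⟩
        have : (0 : ℝ) < 1 / (n + 1) := by positivity
        linarith
      · intro hx
        obtain ⟨n, hn⟩ := exists_nat_one_div_lt (show (0:ℝ) < y - x by linarith)
        exact ⟨n, by linarith⟩
    have htend : Filter.Tendsto (fun n : ℕ => μ (Iic (y - 1 / (n + 1)))) Filter.atTop
        (nhds (μ (Iio y))) := by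
      rw [← hun]
      exact tendsto_measure_iUnion_atTop hmono
    have htendR : Filter.Tendsto (fun n : ℕ => (μ (Iic (y - 1 / (n + 1)))).toReal)
        Filter.atTop (nhds ((μ (Iio y)).toReal)) :=
      (ENNReal.tendsto_toReal (measure_ne_top μ _)).comp htend
    have htendF : Filter.Tendsto (fun n : ℕ => F (y - 1 / (n + 1))) Filter.atTop
        (nhds (F y)) := by
      apply (hFc.tendsto y).comp
      have : Filter.Tendsto (fun n : ℕ => (1 : ℝ) / (n + 1)) Filter.atTop (nhds 0) :=
        tendsto_one_div_add_atTop_nhds_zero_nat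
      have := Filter.Tendsto.const_sub y this
      simpa using this
    have heq : (μ (Iio y)).toReal = F y := by
      apply tendsto_nhds_unique htendR
      simpa [hF] using htendF
    rw [hF] at heq
    exact (ENNReal.toReal_eq_toReal_iff' (measure_ne_top μ _) (measure_ne_top μ _)).1 heq
  have hsplit : μ (Iio y) + μ {y} = μ (Iic y) := by
    rw [← measure_union (by simp) (measurableSet_singleton y)]
    congr 1
    ext x
    simp only [mem_union, mem_Iio, mem_singleton_iff, mem_Iic]
    constructor
    · rintro (h | h) <;> simp [le_of_lt, h, le_refl]
    · intro h
      rcases lt_or_eq_of_le h with h | h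
      · exact Or.inl h
      · exact Or.inr h
  rw [hIio] at hsplit
  have h2 : μ (Iic y) + μ {y} = μ (Iic y) + 0 := by rw [add_zero]; exact hsplit
  exact (ENNReal.add_right_inj (measure_ne_top μ _)).1 h2

/-- sign symmetry of generalized extremiles: if `ℓ` is sign symmetric
(`ℓ(−x,c) = ℓ(x,−c)`) and the cdf `F` of `X` is continuous, then `c` minimizes the
generalized-extremile objective of `X` with distortion density `d` iff `−c` minimizes
the objective of `−X` with the dual density `t ↦ d(1−t)`, and vice versa; i.e.
`e(X; D, ℓ) = −e(−X; D̃, ℓ)` and `e(X; D̃, ℓ) = −e(−X; D, ℓ)`. -/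
theorem stmt6 (μ : Measure ℝ) [IsProbabilityMeasure μ]
    (F G d : ℝ → ℝ) (ℓ : ℝ → ℝ → ℝ)
    (hF : ∀ x, F x = (μ (Iic x)).toReal)
    (hFc : Continuous F)
    (hG : ∀ x, G x = ((Measure.map (fun y : ℝ => -y) μ) (Iic x)).toReal)
    (hsym : ∀ x c, ℓ (-x) c = ℓ x (-c)) :
    (∀ c : ℝ,
      IsMinOn (fun c => ∫ x, d (F x) * (ℓ x c - ℓ x 0) ∂μ) Set.univ c ↔
      IsMinOn (fun c => ∫ x, d (1 - G x) * (ℓ x c - ℓ x 0)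
        ∂(Measure.map (fun y : ℝ => -y) μ)) Set.univ (-c))
    ∧
    (∀ c : ℝ,
      IsMinOn (fun c => ∫ x, d (1 - F x) * (ℓ x c - ℓ x 0) ∂μ) Set.univ c ↔
      IsMinOn (fun c => ∫ x, d (G x) * (ℓ x c - ℓ x 0)
        ∂(Measure.map (fun y : ℝ => -y) μ)) Set.univ (-c)) := by
  have hGneg : ∀ y : ℝ, G (-y) = 1 - F y := by
    intro y
    have hmap : (Measure.map (fun y : ℝ => -y) μ) (Iic (-y)) = μ (Ici y) := by
      rw [Measure.map_apply measurable_neg measurableSet_Iic]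
      congr 1
      ext x
      simp only [mem_preimage, mem_Iic, mem_Ici, neg_le_neg_iff]
    have hIci : μ (Ici y) = μ (Ioi y) := by
      have : μ {y} = 0 := no_atoms μ hF hFc y
      have hsplit : μ ({y} ∪ Ioi y) = μ {y} + μ (Ioi y) :=
        measure_union (by simp) measurableSet_Ioi
      have hu : ({y} ∪ Ioi y : Set ℝ) = Ici y := by
        ext x
        simp only [mem_union, mem_singleton_iff, mem_Ioi, mem_Ici]
        constructor
        · rintro (h | h) <;> simp [h, le_of_lt]
        · intro h
          rcases eq_or_lt_of_le h with h | h
          · exact Or.inl h.symm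
          · exact Or.inr h
      rw [hu] at hsplit
      rw [hsplit, this, zero_add]
    have hcompl : μ (Iic y) + μ (Ioi y) = 1 := by
      have := measure_add_measure_compl (μ := μ) (measurableSet_Iic (a := y))
      rwa [compl_Iic, measure_univ] at this
    have hsum : F y + G (-y) = 1 := by
      rw [hF, hG, hmap, hIci, ← ENNReal.toReal_add (measure_ne_top μ _) (measure_ne_top μ _),
        hcompl, ENNReal.toReal_one]
    linarith
  have e : ℝ ≃ᵐ ℝ := MeasurableEquiv.neg ℝ
  constructor
  · intro c
    apply minOn_neg
    intro c'
    rw [show (fun y : ℝ => -y) = (MeasurableEquiv.neg ℝ : ℝ → ℝ) from rfl,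
      MeasureTheory.integral_map_equiv]
    apply integral_congr_ae
    filter_upwards with y
    simp only [MeasurableEquiv.neg_apply]
    rw [hGneg y, hsym y c']
    have h0 : ℓ (-y) 0 = ℓ y 0 := by rw [hsym y 0, neg_zero]
    rw [h0]
    ring_nf
  · intro c
    apply minOn_neg
    intro c'
    rw [show (fun y : ℝ => -y) = (MeasurableEquiv.neg ℝ : ℝ → ℝ) from rfl,
      MeasureTheory.integral_map_equiv]
    apply integral_congr_ae
    filter_upwards with y
    simp only [MeasurableEquiv.neg_apply]
    rw [hGneg y, hsym y c']
    have h0 : ℓ (-y) 0 = ℓ y 0 := by rw [hsym y 0, neg_zero]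
    rw [h0]
end

section
/- Affine equivariance of generalized extremiles: let a > 0 and b ∈ ℝ, and suppose ℓ is shift invariant (ℓ(x+u, c+u) = ℓ(x,c) for all u) and positive homogeneous of degree k > 0 (ℓ(ax, ac) = a^k ℓ(x,c) for a > 0). If e(X; D, ℓ) is finite and E[d(F_X(X))(ℓ(aX, 0) − ℓ(aX + b, 0))] is finite, then e(aX + b; D, ℓ) = a · e(X; D, ℓ) + b. -/
open MeasureTheory Set

/-
The loss of `aX + b` at `c` is the loss of `X` at `(c - b) / a`, scaled by `a ^ k`: shift by `-b`,
then pull out the factor `a`. The objective of `aX + b` is therefore `a ^ k` times the objective of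
`X` at `(c - b) / a` plus a term independent of `c`, and the affine bijection `c ↦ (c - b) / a`
carries `a c₀ + b` to the minimizer `c₀`.
-/

lemma loss_affine {ℓ : ℝ → ℝ → ℝ} {k a : ℝ} (ha : 0 < a)
    (hshift : ∀ x c u : ℝ, ℓ (x + u) (c + u) = ℓ x c)
    (hhom : ∀ t : ℝ, 0 < t → ∀ x c : ℝ, ℓ (t * x) (t * c) = t ^ k * ℓ x c) (b x c : ℝ) :
    ℓ (a * x + b) c = a ^ k * ℓ x ((c - b) / a) := by
  calc ℓ (a * x + b) c = ℓ (a * x + b) ((c - b) + b) := by rw [sub_add_cancel]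
    _ = ℓ (a * x) (a * ((c - b) / a)) := by rw [hshift, mul_div_cancel₀ _ ha.ne']
    _ = a ^ k * ℓ x ((c - b) / a) := hhom a ha x _

lemma integral_weighted_loss_affine {μ : Measure ℝ} {w : ℝ → ℝ} {ℓ : ℝ → ℝ → ℝ} {k a : ℝ}
    (ha : 0 < a) (hshift : ∀ x c u : ℝ, ℓ (x + u) (c + u) = ℓ x c)
    (hhom : ∀ t : ℝ, 0 < t → ∀ x c : ℝ, ℓ (t * x) (t * c) = t ^ k * ℓ x c) {b c : ℝ}
    (hobj : Integrable (fun x => w x * (ℓ x ((c - b) / a) - ℓ x 0)) μ)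
    (hfin : Integrable (fun x => w x * (ℓ (a * x) 0 - ℓ (a * x + b) 0)) μ) :
    ∫ x, w x * (ℓ (a * x + b) c - ℓ (a * x + b) 0) ∂μ
      = a ^ k * ∫ x, w x * (ℓ x ((c - b) / a) - ℓ x 0) ∂μ
        + ∫ x, w x * (ℓ (a * x) 0 - ℓ (a * x + b) 0) ∂μ := by
  have hpoint : ∀ x, w x * (ℓ (a * x + b) c - ℓ (a * x + b) 0)
      = a ^ k * (w x * (ℓ x ((c - b) / a) - ℓ x 0))
        + w x * (ℓ (a * x) 0 - ℓ (a * x + b) 0) := by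
    intro x
    have hzero : ℓ (a * x) 0 = a ^ k * ℓ x 0 := by simpa using hhom a ha x 0
    rw [loss_affine ha hshift hhom, hzero]
    ring
  simp_rw [hpoint]
  rw [integral_add (hobj.const_mul _) hfin, integral_const_mul]

lemma isMinOn_univ_comp_affine {f : ℝ → ℝ} {c₀ A C a b : ℝ} (hA : 0 ≤ A) (ha : a ≠ 0)
    (hmin : IsMinOn f univ c₀) :
    IsMinOn (fun c => A * f ((c - b) / a) + C) univ (a * c₀ + b) := by
  refine isMinOn_univ_iff.mpr fun c => ?_
  have hc₀ : (a * c₀ + b - b) / a = c₀ := by field_simp; ring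
  rw [hc₀]
  gcongr
  exact isMinOn_univ_iff.mp hmin _

theorem stmt7_general (μ : Measure ℝ)
    (F d : ℝ → ℝ) (ℓ : ℝ → ℝ → ℝ) (a b k c₀ : ℝ)
    (ha : 0 < a)
    (hshift : ∀ x c u : ℝ, ℓ (x + u) (c + u) = ℓ x c)
    (hhom : ∀ t : ℝ, 0 < t → ∀ x c : ℝ, ℓ (t * x) (t * c) = t ^ k * ℓ x c)
    (hobj : ∀ c, Integrable (fun x => d (F x) * (ℓ x c - ℓ x 0)) μ)
    (hmin : IsMinOn (fun c => ∫ x, d (F x) * (ℓ x c - ℓ x 0) ∂μ) Set.univ c₀)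
    (hfin : Integrable (fun x => d (F x) * (ℓ (a * x) 0 - ℓ (a * x + b) 0)) μ) :
    IsMinOn (fun c => ∫ x, d (F x) * (ℓ (a * x + b) c - ℓ (a * x + b) 0) ∂μ)
      Set.univ (a * c₀ + b) := by
  have hobjective : (fun c => ∫ x, d (F x) * (ℓ (a * x + b) c - ℓ (a * x + b) 0) ∂μ)
      = fun c => a ^ k * (∫ x, d (F x) * (ℓ x ((c - b) / a) - ℓ x 0) ∂μ)
        + ∫ x, d (F x) * (ℓ (a * x) 0 - ℓ (a * x + b) 0) ∂μ :=
    funext fun c => integral_weighted_loss_affine ha hshift hhom (hobj _) hfin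
  rw [hobjective]
  exact isMinOn_univ_comp_affine (Real.rpow_nonneg ha.le k) ha.ne' hmin

/-- affine equivariance: let `a > 0`, `b ∈ ℝ`, `ℓ` shift invariant and
positive homogeneous of degree `k > 0`. If `c₀ = e(X; D, ℓ)` is a (finite) minimizer of
the generalized-extremile objective of `X` and
`E[d(F_X(X))(ℓ(aX,0) − ℓ(aX+b,0))]` is finite, then `a·c₀ + b` minimizes the objective
of `aX + b` (written via `F_{aX+b}(aX+b) = F_X(X)` a.s.), i.e.
`e(aX+b; D, ℓ) = a · e(X; D, ℓ) + b`. -/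
theorem stmt7 (μ : Measure ℝ) [IsProbabilityMeasure μ]
    (F d : ℝ → ℝ) (ℓ : ℝ → ℝ → ℝ) (a b k c₀ : ℝ)
    (ha : 0 < a) (hk : 0 < k)
    (hF : ∀ x, F x = (μ (Iic x)).toReal)
    (hshift : ∀ x c u : ℝ, ℓ (x + u) (c + u) = ℓ x c)
    (hhom : ∀ t : ℝ, 0 < t → ∀ x c : ℝ, ℓ (t * x) (t * c) = t ^ k * ℓ x c)
    (hobj : ∀ c, Integrable (fun x => d (F x) * (ℓ x c - ℓ x 0)) μ)
    (hmin : IsMinOn (fun c => ∫ x, d (F x) * (ℓ x c - ℓ x 0) ∂μ) Set.univ c₀)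
    (hfin : Integrable (fun x => d (F x) * (ℓ (a * x) 0 - ℓ (a * x + b) 0)) μ) :
    IsMinOn (fun c => ∫ x, d (F x) * (ℓ (a * x + b) c - ℓ (a * x + b) 0) ∂μ)
      Set.univ (a * c₀ + b) :=
  stmt7_general μ F d ℓ a b k c₀ ha hshift hhom hobj hmin hfin
end

section
/- Monotone transformation invariance: if α : ℝ → ℝ is strictly increasing, then e(α(X); D, ℓ) = e(X; D, ℓ̃) where ℓ̃(x,c) := ℓ(α(x), c). If instead α is strictly decreasing and F_X is continuous, then e(α(X); D, ℓ) = e(X; D̃, ℓ̃), where D̃(t) = 1 − D(1−t). -/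
/-!
Change of variables `y = α x` turns the objective of `α(X)` into an integral against the law of
`X`, and the distribution function of `α(X)` at `α x` is `F x` for increasing `α` and
`P(X ≥ x) = 1 - F x` for decreasing `α`; the last step needs `P(X = x) = 0`, which is what
continuity of `F` provides.
-/

open MeasureTheory Set ProbabilityTheory Function

lemma measure_singleton_eq_zero_of_continuousAt {μ : Measure ℝ} [IsProbabilityMeasure μ] {x : ℝ}
    (h : ContinuousAt (fun y => (μ (Iic y)).toReal) x) : μ {x} = 0 := by
  have hcdf : ContinuousAt (cdf μ) x := by
    convert h using 1
    funext y
    rw [cdf_eq_real, measureReal_def]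
  rw [← measure_cdf μ, StieltjesFunction.measure_singleton,
    leftLim_eq_of_tendsto (hcdf.tendsto.mono_left nhdsWithin_le_nhds), sub_self,
    ENNReal.ofReal_zero]

lemma map_apply_Iic_of_strictMono {μ : Measure ℝ} {α : ℝ → ℝ} (hα : StrictMono α) (x : ℝ) :
    μ.map α (Iic (α x)) = μ (Iic x) := by
  rw [Measure.map_apply hα.monotone.measurable measurableSet_Iic]
  congr 1
  ext y
  simp [hα.le_iff_le]

lemma map_apply_Iic_of_strictAnti {μ : Measure ℝ} [IsProbabilityMeasure μ] {α : ℝ → ℝ}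
    (hα : StrictAnti α) {x : ℝ} (hx : μ {x} = 0) :
    (μ.map α (Iic (α x))).toReal = 1 - (μ (Iic x)).toReal := by
  have hpre : α ⁻¹' Iic (α x) = Ici x := by
    ext y
    simp [hα.le_iff_ge]
  rw [Measure.map_apply hα.antitone.measurable measurableSet_Iic, hpre,
    ← measure_congr (Ioi_ae_eq_Ici' hx), ← compl_Iic]
  simpa only [measureReal_def] using probReal_compl_eq_one_sub (μ := μ) measurableSet_Iic

lemma integral_map_of_comp_eq {X Y T E : Type*} [MeasurableSpace X] [MeasurableSpace Y]
    [NormedAddCommGroup E] [NormedSpace ℝ E] {μ : Measure X} {α : X → Y}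
    (hα : MeasurableEmbedding α) {G : Y → T} {H : X → T} (hGH : ∀ x, G (α x) = H x)
    (f : T → Y → E) :
    ∫ y, f (G y) y ∂(μ.map α) = ∫ x, f (H x) (α x) ∂μ := by
  simp only [hα.integral_map, hGH]

/-- monotone transformation invariance: if `α` is strictly increasing,
then `c` minimizes the generalized-extremile objective of `α(X)` with `(D, ℓ)` iff it
minimizes the objective of `X` with `(D, ℓ̃)` where `ℓ̃(x,c) = ℓ(α(x),c)`; if `α` is
strictly decreasing and `F_X` is continuous, the same holds with the dual distortion
`D̃` (density `t ↦ d(1−t)`) in place of `D`. -/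
theorem stmt8 (μ : Measure ℝ) [IsProbabilityMeasure μ]
    (F Fα d : ℝ → ℝ) (ℓ : ℝ → ℝ → ℝ) (α : ℝ → ℝ)
    (hF : ∀ x, F x = (μ (Iic x)).toReal)
    (hFα : ∀ x, Fα x = ((Measure.map α μ) (Iic x)).toReal) :
    (StrictMono α →
      ∀ c : ℝ,
        IsMinOn (fun c => ∫ y, d (Fα y) * (ℓ y c - ℓ y 0) ∂(Measure.map α μ))
          Set.univ c ↔
        IsMinOn (fun c => ∫ x, d (F x) * (ℓ (α x) c - ℓ (α x) 0) ∂μ) Set.univ c)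
    ∧
    (StrictAnti α → Continuous F →
      ∀ c : ℝ,
        IsMinOn (fun c => ∫ y, d (Fα y) * (ℓ y c - ℓ y 0) ∂(Measure.map α μ))
          Set.univ c ↔
        IsMinOn (fun c => ∫ x, d (1 - F x) * (ℓ (α x) c - ℓ (α x) 0) ∂μ)
          Set.univ c) := by
  have objective_eq {G : ℝ → ℝ} (hα : MeasurableEmbedding α) (hG : ∀ x, Fα (α x) = G x) :
      (fun c => ∫ y, d (Fα y) * (ℓ y c - ℓ y 0) ∂(Measure.map α μ)) =
        fun c => ∫ x, d (G x) * (ℓ (α x) c - ℓ (α x) 0) ∂μ :=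
    funext fun c => integral_map_of_comp_eq hα hG fun t y => d t * (ℓ y c - ℓ y 0)
  refine ⟨fun hα c => ?_, fun hα hFc c => ?_⟩
  · have hemb := hα.monotone.measurable.measurableEmbedding hα.injective
    rw [objective_eq (G := F) hemb fun x => by rw [hFα, map_apply_Iic_of_strictMono hα, hF]]
  · have hemb := hα.antitone.measurable.measurableEmbedding hα.injective
    have hcont : Continuous fun y => (μ (Iic y)).toReal := by simpa only [← hF] using hFc
    rw [objective_eq (G := fun x => 1 - F x) hemb fun x => by
      rw [hFα, hF, map_apply_Iic_of_strictAnti hα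
        (measure_singleton_eq_zero_of_continuousAt hcont.continuousAt)]]
end

section
/- Comonotonic additivity for the square loss: if X and Y are integrable random variables with comonotonic joint distribution, i.e. F_{X,Y}(x,y) = min{F_X(x), F_Y(y)}, then for the square loss the generalized extremile is additive: e(X+Y; D) = e(X; D) + e(Y; D), where e(Z; D) = ∫₀¹ F_Z^{-1}(u) d(u) du. -/
/-!
Comonotonicity says `P(X ≤ x, Y ≤ y) = min (F_X x) (F_Y y)`. Since
`{X ≤ x, Y ≤ y} ⊆ {X + Y ≤ x + y} ⊆ {X ≤ x} ∪ {Y ≤ y}`, inclusion–exclusion squeezes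
`F_{X+Y} (x + y)` between `min` and `max` of `F_X x` and `F_Y y`. Such a squeeze forces the
infimum of `{z | u ≤ F_{X+Y} z}` to be the sum of the infima of `{x | u ≤ F_X x}` and
`{y | u ≤ F_Y y}`: the lower quantiles add at every level `u ∈ (0, 1)`, and integrating
against `d` gives additivity.
-/

open MeasureTheory Set
open scoped ProbabilityTheory Pointwise

theorem csInf_superlevel_eq_add_of_min_le_le_max {β : Type*} [LinearOrder β]
    {F G H : ℝ → β} {u : β}
    (hlow : ∀ x y, min (F x) (G y) ≤ H (x + y)) (hup : ∀ x y, H (x + y) ≤ max (F x) (G y))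
    (hF : {x | u ≤ F x}.Nonempty) (hF' : BddBelow {x | u ≤ F x})
    (hG : {y | u ≤ G y}.Nonempty) (hG' : BddBelow {y | u ≤ G y})
    (hH : {z | u ≤ H z}.Nonempty) (hH' : BddBelow {z | u ≤ H z}) :
    sInf {z | u ≤ H z} = sInf {x | u ≤ F x} + sInf {y | u ≤ G y} := by
  apply le_antisymm
  · rw [← csInf_add hF hF' hG hG']
    refine csInf_le_csInf hH' (hF.add hG) ?_
    rintro _ ⟨x, hx, y, hy, rfl⟩
    exact (le_min hx hy).trans (hlow x y)
  · refine le_csInf hH fun z hz => ?_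
    by_contra! hlt
    set a := sInf {x | u ≤ F x}
    set b := sInf {y | u ≤ G y}
    have hx : a - (a + b - z) / 2 < a := by linarith
    have hy : z - (a - (a + b - z) / 2) < b := by linarith
    have hsplit := hup (a - (a + b - z) / 2) (z - (a - (a + b - z) / 2))
    rw [add_sub_cancel] at hsplit
    rcases le_max_iff.mp (hz.trans hsplit) with h | h
    · exact (csInf_le hF' h).not_gt hx
    · exact (csInf_le hG' h).not_gt hy

section Distribution

variable {Ω : Type*} [MeasurableSpace Ω] {μ : Measure Ω}

theorem measure_le_toReal_eq_cdf_map [IsProbabilityMeasure μ] {Z : Ω → ℝ}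
    (hZ : AEMeasurable Z μ) (x : ℝ) :
    (μ {ω | Z ω ≤ x}).toReal = ProbabilityTheory.cdf (μ.map Z) x := by
  have : IsProbabilityMeasure (μ.map Z) := Measure.isProbabilityMeasure_map hZ
  rw [ProbabilityTheory.cdf_eq_real, measureReal_def,
    Measure.map_apply_of_aemeasurable hZ measurableSet_Iic]
  rfl

theorem nonempty_setOf_le_measure_le [IsProbabilityMeasure μ] {Z : Ω → ℝ}
    (hZ : AEMeasurable Z μ) {u : ℝ} (hu : u < 1) :
    {x | u ≤ (μ {ω | Z ω ≤ x}).toReal}.Nonempty := by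
  obtain ⟨x, hx⟩ :=
    ((ProbabilityTheory.tendsto_cdf_atTop (μ.map Z)).eventually_const_le hu).exists
  exact ⟨x, by rwa [mem_ofPred_eq, measure_le_toReal_eq_cdf_map hZ]⟩

theorem bddBelow_setOf_le_measure_le [IsProbabilityMeasure μ] {Z : Ω → ℝ}
    (hZ : AEMeasurable Z μ) {u : ℝ} (hu : 0 < u) :
    BddBelow {x | u ≤ (μ {ω | Z ω ≤ x}).toReal} := by
  obtain ⟨x₀, hx₀⟩ :=
    ((ProbabilityTheory.tendsto_cdf_atBot (μ.map Z)).eventually_lt_const hu).exists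
  refine ⟨x₀, fun x hx => ?_⟩
  by_contra! hlt
  rw [mem_ofPred_eq, measure_le_toReal_eq_cdf_map hZ] at hx
  exact hx.not_gt ((ProbabilityTheory.monotone_cdf _ hlt.le).trans_lt hx₀)

def HasComonotoneCdf (μ : Measure Ω) (X Y : Ω → ℝ) : Prop :=
  ∀ x y : ℝ, (μ {ω | X ω ≤ x ∧ Y ω ≤ y}).toReal
    = min (μ {ω | X ω ≤ x}).toReal (μ {ω | Y ω ≤ y}).toReal

variable [IsFiniteMeasure μ] {X Y : Ω → ℝ}

theorem HasComonotoneCdf.min_le_measure_add_le (hcom : HasComonotoneCdf μ X Y) (x y : ℝ) :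
    min (μ {ω | X ω ≤ x}).toReal (μ {ω | Y ω ≤ y}).toReal
      ≤ (μ {ω | X ω + Y ω ≤ x + y}).toReal := by
  rw [← hcom]
  exact ENNReal.toReal_mono (measure_ne_top _ _)
    (measure_mono fun ω hω => add_le_add hω.1 hω.2)

theorem HasComonotoneCdf.measure_add_le_le_max (hcom : HasComonotoneCdf μ X Y)
    (hY : AEMeasurable Y μ) (x y : ℝ) :
    (μ {ω | X ω + Y ω ≤ x + y}).toReal
      ≤ max (μ {ω | X ω ≤ x}).toReal (μ {ω | Y ω ≤ y}).toReal := by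
  have hsub : {ω | X ω + Y ω ≤ x + y} ⊆ {ω | X ω ≤ x} ∪ {ω | Y ω ≤ y} := by
    intro ω hω
    by_contra! h
    simp only [mem_union, mem_ofPred_eq, not_or, not_le] at h
    exact hω.not_gt (add_lt_add h.1 h.2)
  have hincl_excl : (μ ({ω | X ω ≤ x} ∪ {ω | Y ω ≤ y})).toReal
      + (μ {ω | X ω ≤ x ∧ Y ω ≤ y}).toReal
      = (μ {ω | X ω ≤ x}).toReal + (μ {ω | Y ω ≤ y}).toReal :=
    measureReal_union_add_inter₀ (hY.nullMeasurable measurableSet_Iic)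
  rw [hcom] at hincl_excl
  calc (μ {ω | X ω + Y ω ≤ x + y}).toReal
      ≤ (μ ({ω | X ω ≤ x} ∪ {ω | Y ω ≤ y})).toReal :=
        ENNReal.toReal_mono (measure_ne_top _ _) (measure_mono hsub)
    _ = _ := by linarith [min_add_max (μ {ω | X ω ≤ x}).toReal (μ {ω | Y ω ≤ y}).toReal]

end Distribution

theorem stmt10_general {Ω : Type*} [MeasureSpace Ω] [IsProbabilityMeasure (ℙ : Measure Ω)]
    (X Y : Ω → ℝ) (hX : Measurable X) (hY : Measurable Y)
    (d : ℝ → ℝ)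
    (hcom : ∀ x y : ℝ, (ℙ {ω | X ω ≤ x ∧ Y ω ≤ y}).toReal
      = min (ℙ {ω | X ω ≤ x}).toReal (ℙ {ω | Y ω ≤ y}).toReal)
    (Q : (Ω → ℝ) → ℝ → ℝ)
    (hQ : ∀ (Z : Ω → ℝ) (u : ℝ), Q Z u = sInf {x : ℝ | u ≤ (ℙ {ω | Z ω ≤ x}).toReal})
    (hiX : IntegrableOn (fun u => Q X u * d u) (Ioo (0:ℝ) 1))
    (hiY : IntegrableOn (fun u => Q Y u * d u) (Ioo (0:ℝ) 1)) :
    ∫ u in Ioo (0:ℝ) 1, Q (fun ω => X ω + Y ω) u * d u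
      = (∫ u in Ioo (0:ℝ) 1, Q X u * d u) + ∫ u in Ioo (0:ℝ) 1, Q Y u * d u := by
  have hXY : AEMeasurable (fun ω => X ω + Y ω) := (hX.add hY).aemeasurable
  have hQ_add : ∀ u ∈ Ioo (0:ℝ) 1, Q (fun ω => X ω + Y ω) u = Q X u + Q Y u := by
    rintro u ⟨hu₀, hu₁⟩
    rw [hQ, hQ, hQ]
    exact csInf_superlevel_eq_add_of_min_le_le_max
      (HasComonotoneCdf.min_le_measure_add_le hcom)
      (HasComonotoneCdf.measure_add_le_le_max hcom hY.aemeasurable)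
      (nonempty_setOf_le_measure_le hX.aemeasurable hu₁)
      (bddBelow_setOf_le_measure_le hX.aemeasurable hu₀)
      (nonempty_setOf_le_measure_le hY.aemeasurable hu₁)
      (bddBelow_setOf_le_measure_le hY.aemeasurable hu₀)
      (nonempty_setOf_le_measure_le hXY hu₁) (bddBelow_setOf_le_measure_le hXY hu₀)
  calc ∫ u in Ioo (0:ℝ) 1, Q (fun ω => X ω + Y ω) u * d u
      = ∫ u in Ioo (0:ℝ) 1, (Q X u * d u + Q Y u * d u) :=
        setIntegral_congr_fun measurableSet_Ioo fun u hu => by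
          simp only [hQ_add u hu, add_mul]
    _ = _ := integral_add hiX hiY

/-- comonotonic additivity for square loss: if `X` and `Y` are
integrable and comonotonic, `F_{X,Y}(x,y) = min{F_X(x), F_Y(y)}`, then the
square-loss generalized extremile `e(Z; D) = ∫₀¹ F_Z⁻¹(u) d(u) du` is additive:
`e(X+Y; D) = e(X; D) + e(Y; D)`. -/
theorem stmt10 {Ω : Type*} [MeasureSpace Ω] [IsProbabilityMeasure (ℙ : Measure Ω)]
    (X Y : Ω → ℝ) (hX : Measurable X) (hY : Measurable Y)
    (hXi : Integrable X) (hYi : Integrable Y)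
    (d : ℝ → ℝ)
    (hcom : ∀ x y : ℝ, (ℙ {ω | X ω ≤ x ∧ Y ω ≤ y}).toReal
      = min (ℙ {ω | X ω ≤ x}).toReal (ℙ {ω | Y ω ≤ y}).toReal)
    (Q : (Ω → ℝ) → ℝ → ℝ)
    (hQ : ∀ (Z : Ω → ℝ) (u : ℝ), Q Z u = sInf {x : ℝ | u ≤ (ℙ {ω | Z ω ≤ x}).toReal})
    (hiXY : IntegrableOn (fun u => Q (fun ω => X ω + Y ω) u * d u) (Ioo (0:ℝ) 1))
    (hiX : IntegrableOn (fun u => Q X u * d u) (Ioo (0:ℝ) 1))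
    (hiY : IntegrableOn (fun u => Q Y u * d u) (Ioo (0:ℝ) 1)) :
    ∫ u in Ioo (0:ℝ) 1, Q (fun ω => X ω + Y ω) u * d u
      = (∫ u in Ioo (0:ℝ) 1, Q X u * d u) + ∫ u in Ioo (0:ℝ) 1, Q Y u * d u :=
  stmt10_general X Y hX hY d hcom Q hQ hiX hiY
end

section
/- Quantile of the distorted variable: for the quantile loss ℓ_δ(x,c) = |δ − 1_{x ≤ c}| · |x − c| with δ ∈ (0,1), the function λ(c) := E[d(F_X(X)) ℓ_δ'(X,c)] with ℓ_δ'(x,c) = 1_{x ≤ c} − δ satisfies λ(c) = D(F_X(c)) − δ; hence any root c of λ satisfies D(F_X(c)) = δ, i.e. c is a δ-quantile of the distorted random variable X_D. -/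
/-!
An atomless law `μ` has a continuous cdf `F`, and `F` pushes `μ` forward to the uniform law on
`[0, 1]` (probability integral transform). Moreover `{x ≤ c}` and `{F x ≤ F c}` differ by a
`μ`-null set, so `E[d(F X) 1_{X ≤ c}] = ∫₀^{F c} d = D (F c)`, while `E[d(F X)] = D 1 = 1`.
-/

open MeasureTheory Set ProbabilityTheory

theorem Set.Iic_inter_Icc_of_le {α : Type*} [LinearOrder α] {a b c : α} (h : a ≤ c) :
    Iic a ∩ Icc b c = Icc b a := by
  ext x
  simp only [mem_inter_iff, mem_Iic, mem_Icc]
  exact ⟨fun hx => ⟨hx.2.1, hx.1⟩, fun hx => ⟨hx.2, hx.1, hx.2.trans h⟩⟩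

namespace ProbabilityTheory

variable (μ : Measure ℝ) [IsProbabilityMeasure μ]

theorem continuous_cdf [NullSingletonClass μ] : Continuous (cdf μ) := by
  refine continuous_iff_continuousAt.2 fun a => continuousAt_iff_continuous_left_right.2
    ⟨?_, (cdf μ).right_continuous a⟩
  have hjump := (cdf μ).measure_singleton a
  rw [measure_cdf, measure_singleton, eq_comm, ENNReal.ofReal_eq_zero] at hjump
  rw [← continuousWithinAt_Iio_iff_Iic, (monotone_cdf μ).continuousWithinAt_Iio_iff_leftLim_eq]
  linarith [(monotone_cdf μ).leftLim_le (le_refl a)]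

theorem measure_cdf_preimage_Iic [NullSingletonClass μ] {t : ℝ} (ht : t ∈ Icc 0 1) :
    μ (cdf μ ⁻¹' Iic t) = ENNReal.ofReal t := by
  rcases ht.2.eq_or_lt with rfl | ht1
  · rw [show cdf μ ⁻¹' Iic 1 = univ from eq_univ_of_forall (cdf_le_one μ)]
    simp
  set A := cdf μ ⁻¹' Iic t
  have hA_closed : IsClosed A := isClosed_Iic.preimage (continuous_cdf μ)
  have hA_bdd : BddAbove A := by
    obtain ⟨M, hM⟩ := ((tendsto_cdf_atTop μ).eventually_const_lt ht1).exists_forall_of_atTop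
    exact ⟨M, fun x hx => not_lt.1 fun hMx => (hM x hMx.le).not_ge hx⟩
  rcases A.eq_empty_or_nonempty with hA | hA
  · obtain rfl : t = 0 := by
      refine le_antisymm (not_lt.1 fun ht0 => ?_) ht.1
      obtain ⟨x, hx⟩ := ((tendsto_cdf_atBot μ).eventually_lt_const ht0).exists
      exact hA.subset (le_of_lt hx : x ∈ A)
    simp [hA]
  set s := sSup A
  have hs : cdf μ s ≤ t := hA_closed.csSup_mem hA hA_bdd
  have hA_eq : A = Iic s := Subset.antisymm (fun _ hx => le_csSup hA_bdd hx)
    fun _ hx => (monotone_cdf μ hx).trans hs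
  -- `cdf μ > t` to the right of `s`, so by continuity also at `s`
  have hs' : t ≤ cdf μ s := by
    have hIci : Ici s ⊆ {x | t ≤ cdf μ x} := by
      rw [← closure_Ioi]
      refine closure_minimal (fun x hx => ?_) (isClosed_le continuous_const (continuous_cdf μ))
      have hxA : ¬ cdf μ x ≤ t := by
        change x ∉ A
        rw [hA_eq, mem_Iic, not_le]
        exact hx
      exact (not_le.1 hxA).le
    exact hIci self_mem_Ici
  rw [hA_eq, ← ofReal_cdf, le_antisymm hs hs']

theorem map_cdf [NullSingletonClass μ] : μ.map (cdf μ) = volume.restrict (Icc 0 1) := by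
  have : IsProbabilityMeasure (volume.restrict (Icc (0 : ℝ) 1)) := ⟨by simp⟩
  have : IsProbabilityMeasure (μ.map (cdf μ)) :=
    Measure.isProbabilityMeasure_map (monotone_cdf μ).measurable.aemeasurable
  refine Measure.ext_of_Iic _ _ fun t => ?_
  rw [Measure.map_apply (monotone_cdf μ).measurable measurableSet_Iic,
    Measure.restrict_apply measurableSet_Iic]
  rcases lt_or_ge t 0 with ht0 | ht0
  · have hF : cdf μ ⁻¹' Iic t = ∅ :=
      eq_empty_of_forall_notMem fun x hx => (ht0.trans_le (cdf_nonneg μ x)).not_ge hx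
    have hI : Iic t ∩ Icc (0 : ℝ) 1 = ∅ :=
      eq_empty_of_forall_notMem fun x hx => (ht0.trans_le hx.2.1).not_ge hx.1
    simp [hF, hI]
  rcases le_or_gt t 1 with ht1 | ht1
  · rw [measure_cdf_preimage_Iic μ ⟨ht0, ht1⟩, Iic_inter_Icc_of_le ht1, Real.volume_Icc,
      sub_zero]
  · rw [show cdf μ ⁻¹' Iic t = univ from
        eq_univ_of_forall fun x => (cdf_le_one μ x).trans ht1.le,
      inter_eq_right.2 fun x hx => hx.2.trans ht1.le]
    simp

theorem Iic_ae_eq_cdf_preimage [NullSingletonClass μ] (c : ℝ) :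
    Iic c =ᵐ[μ] cdf μ ⁻¹' Iic (cdf μ c) :=
  ae_eq_of_subset_of_measure_ge (fun _ hx => monotone_cdf μ hx)
    (by rw [measure_cdf_preimage_Iic μ ⟨cdf_nonneg μ c, cdf_le_one μ c⟩, ofReal_cdf])
    measurableSet_Iic.nullMeasurableSet (measure_ne_top μ _)

variable [NullSingletonClass μ] {g : ℝ → ℝ}

theorem integrable_comp_cdf (hg : IntegrableOn g (Icc 0 1)) :
    Integrable (fun x => g (cdf μ x)) μ :=
  Integrable.comp_measurable (by rwa [map_cdf]) (monotone_cdf μ).measurable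

theorem integral_comp_cdf (hg : IntegrableOn g (Icc 0 1)) :
    ∫ x, g (cdf μ x) ∂μ = ∫ s in Icc 0 1, g s := by
  rw [← map_cdf μ,
    integral_map (monotone_cdf μ).measurable.aemeasurable (by rw [map_cdf]; exact hg.1)]

theorem setIntegral_Iic_comp_cdf (hg : IntegrableOn g (Icc 0 1)) (c : ℝ) :
    ∫ x in Iic c, g (cdf μ x) ∂μ = ∫ s in Icc 0 (cdf μ c), g s := by
  rw [setIntegral_congr_set (Iic_ae_eq_cdf_preimage μ c), ← setIntegral_map measurableSet_Iic
    (by rw [map_cdf]; exact hg.1) (monotone_cdf μ).measurable.aemeasurable, map_cdf,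
    Measure.restrict_restrict measurableSet_Iic, Iic_inter_Icc_of_le (cdf_le_one μ c)]

end ProbabilityTheory

theorem integral_mul_ite_le_sub {μ : Measure ℝ} {h : ℝ → ℝ}
    (hh : Integrable h μ) (c δ : ℝ) :
    ∫ x, h x * ((if x ≤ c then (1:ℝ) else 0) - δ) ∂μ =
      ∫ x in Iic c, h x ∂μ - δ * ∫ x, h x ∂μ := by
  rw [← integral_indicator measurableSet_Iic, ← integral_const_mul,
    ← integral_sub (hh.indicator measurableSet_Iic) (hh.const_mul δ)]
  congr 1 with x
  by_cases hx : x ≤ c <;> simp only [hx, if_true, if_false, indicator, mem_Iic] <;> ring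

theorem stmt15_general (μ : Measure ℝ) [IsProbabilityMeasure μ]
    (F D d f : ℝ → ℝ) (δ : ℝ)
    (hf : μ = MeasureTheory.volume.withDensity (fun x => ENNReal.ofReal (f x)))
    (hF : ∀ x, F x = (μ (Iic x)).toReal)
    (hDdens : ∀ t ∈ Icc (0:ℝ) 1, D t = ∫ s in Icc (0:ℝ) t, d s)
    (hD1 : D 1 = 1) :
    (∀ c : ℝ, ∫ x, d (F x) * ((if x ≤ c then (1:ℝ) else 0) - δ) ∂μ = D (F c) - δ)
    ∧ ∀ c : ℝ,
        (∫ x, d (F x) * ((if x ≤ c then (1:ℝ) else 0) - δ) ∂μ) = 0 →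
        D (F c) = δ := by
  have : NullSingletonClass μ := hf ▸ inferInstance
  obtain rfl : F = cdf μ := funext fun x => by rw [hF, cdf_eq_real, measureReal_def]
  have hd : IntegrableOn d (Icc 0 1) := by
    by_contra hd
    simpa [hD1, integral_undef hd] using hDdens 1 ⟨zero_le_one, le_rfl⟩
  have hlambda (c : ℝ) :
      ∫ x, d (cdf μ x) * ((if x ≤ c then (1:ℝ) else 0) - δ) ∂μ = D (cdf μ c) - δ := by
    rw [integral_mul_ite_le_sub (integrable_comp_cdf μ hd), setIntegral_Iic_comp_cdf μ hd,
      integral_comp_cdf μ hd, ← hDdens _ ⟨cdf_nonneg μ c, cdf_le_one μ c⟩,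
      ← hDdens 1 ⟨zero_le_one, le_rfl⟩, hD1, mul_one]
  exact ⟨hlambda, fun c hc => by linarith [hlambda c]⟩

/-- quantile of the distorted variable: for the quantile loss with
right derivative `ℓ_δ'(x,c) = 1_{x ≤ c} − δ`, the function
`λ(c) = E[d(F_X(X)) ℓ_δ'(X,c)]` equals `D(F_X(c)) − δ`; hence any root `c` of `λ`
satisfies `D(F_X(c)) = δ`, i.e. `c` is a `δ`-quantile of the distorted variable `X_D`. -/
theorem stmt15 (μ : Measure ℝ) [IsProbabilityMeasure μ]
    (F D d f : ℝ → ℝ) (δ : ℝ) (hδ : δ ∈ Ioo (0:ℝ) 1)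
    (hf : μ = MeasureTheory.volume.withDensity (fun x => ENNReal.ofReal (f x)))
    (hF : ∀ x, F x = (μ (Iic x)).toReal)
    (hDdens : ∀ t ∈ Icc (0:ℝ) 1, D t = ∫ s in Icc (0:ℝ) t, d s)
    (hD1 : D 1 = 1) :
    (∀ c : ℝ, ∫ x, d (F x) * ((if x ≤ c then (1:ℝ) else 0) - δ) ∂μ = D (F c) - δ)
    ∧ ∀ c : ℝ,
        (∫ x, d (F x) * ((if x ≤ c then (1:ℝ) else 0) - δ) ∂μ) = 0 →
        D (F c) = δ :=
  stmt15_general μ F D d f δ hf hF hDdens hD1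
end
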